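/- arXiv:cs/0508106 — 2 statements merged into one kernel-verified Lean document; each statement's English description precedes it below -/
import Mathlib

section
/- Given a query S and a binary rule r := H ← c ◇ B, there exists a derivation step of S with respect to r if and only if [S] ∩ [⟨H | c⟩] ≠ ∅. -/
/- A formalization of binary CLP(C): terms, constraints, queries, rules,
   derivation steps, loops, projections, filters, DN / DNlog / DNsyn. -/

namespace CLP

/-- First-order terms over a signature of function symbols `F` with arities `arF`. -/
inductive Tm (F : Type) (arF : F → ℕ) : Type
  | var : ℕ → Tm F arF
  | app : (f : F) → (Fin (arF f) → Tm F arF) → Tm F arF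

variable {F : Type} {arF : F → ℕ} {Pc : Type} {arP : Pc → ℕ}
  {Prd : Type} {arPrd : Prd → ℕ} {D : Type}

/-- Variables of a term. -/
def Tm.fv : Tm F arF → Finset ℕ
  | .var x => {x}
  | .app _ ts => Finset.univ.biUnion fun i => (ts i).fv

/-- Apply a variable substitution to a term. -/
def Tm.rename (σ : ℕ → ℕ) : Tm F arF → Tm F arF
  | .var x => .var (σ x)
  | .app f ts => .app f fun i => (ts i).rename σ

/-- Finite conjunctions of primitive constraints (including equality). -/
inductive Con (F : Type) (arF : F → ℕ) (Pc : Type) (arP : Pc → ℕ) : Type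
  | tru : Con F arF Pc arP
  | eq : Tm F arF → Tm F arF → Con F arF Pc arP
  | prim : (c : Pc) → (Fin (arP c) → Tm F arF) → Con F arF Pc arP
  | and : Con F arF Pc arP → Con F arF Pc arP → Con F arF Pc arP

/-- Variables of a constraint. -/
def Con.fv : Con F arF Pc arP → Finset ℕ
  | .tru => ∅
  | .eq s t => s.fv ∪ t.fv
  | .prim _ ts => Finset.univ.biUnion fun i => (ts i).fv
  | .and c d => c.fv ∪ d.fv

/-- Apply a variable substitution to a constraint. -/
def Con.rename (σ : ℕ → ℕ) : Con F arF Pc arP → Con F arF Pc arP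
  | .tru => .tru
  | .eq s t => .eq (s.rename σ) (t.rename σ)
  | .prim c ts => .prim c fun i => (ts i).rename σ
  | .and c d => .and (c.rename σ) (d.rename σ)

/-- The domain of computation `D_C`: an interpretation of the function and
constraint-predicate symbols over a domain `D`. -/
structure Interp (F : Type) (arF : F → ℕ) (Pc : Type) (arP : Pc → ℕ) (D : Type) where
  fn : (f : F) → (Fin (arF f) → D) → D
  pr : (c : Pc) → (Fin (arP c) → D) → Prop

/-- Evaluation of a term under a valuation `v : Var → D`. -/
def Tm.eval (If : (f : F) → (Fin (arF f) → D) → D) (v : ℕ → D) : Tm F arF → D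
  | .var x => v x
  | .app f ts => If f fun i => (ts i).eval If v

/-- `D_C ⊨_v c`. -/
def Con.Sat (I : Interp F arF Pc arP D) (v : ℕ → D) : Con F arF Pc arP → Prop
  | .tru => True
  | .eq s t => s.eval I.fn v = t.eval I.fn v
  | .prim c ts => I.pr c fun i => (ts i).eval I.fn v
  | .and c d => c.Sat I v ∧ d.Sat I v

/-- A query `⟨p(t̃) | d⟩`. -/
structure Query (F : Type) (arF : F → ℕ) (Pc : Type) (arP : Pc → ℕ)
    (Prd : Type) (arPrd : Prd → ℕ) where
  p : Prd
  args : Fin (arPrd p) → Tm F arF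
  con : Con F arF Pc arP

/-- Variables of a query. -/
def Query.fv (S : Query F arF Pc arP Prd arPrd) : Finset ℕ :=
  (Finset.univ.biUnion fun i => (S.args i).fv) ∪ S.con.fv

/-- Apply a variable substitution to a query. -/
def Query.rename (σ : ℕ → ℕ) (S : Query F arF Pc arP Prd arPrd) :
    Query F arF Pc arP Prd arPrd :=
  ⟨S.p, fun i => (S.args i).rename σ, S.con.rename σ⟩

/-- The set `[S]` of atoms (predicate applied to domain values) described by a query `S`. -/
def Query.set (I : Interp F arF Pc arP D) (S : Query F arF Pc arP Prd arPrd) :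
    Set (Σ p : Prd, Fin (arPrd p) → D) :=
  { a | ∃ v : ℕ → D, S.con.Sat I v ∧ a = ⟨S.p, fun i => (S.args i).eval I.fn v⟩ }

/-- `S'` is more general than `S` iff `[S] ⊆ [S']`. -/
def MoreGen (I : Interp F arF Pc arP D) (S' S : Query F arF Pc arP Prd arPrd) : Prop :=
  S.set I ⊆ S'.set I

/-- A binary rule `p(s̃) ← c ◇ q(t̃)`. -/
structure Rule (F : Type) (arF : F → ℕ) (Pc : Type) (arP : Pc → ℕ)
    (Prd : Type) (arPrd : Prd → ℕ) where
  hp : Prd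
  hargs : Fin (arPrd hp) → Tm F arF
  con : Con F arF Pc arP
  bp : Prd
  bargs : Fin (arPrd bp) → Tm F arF

/-- Variables of a rule. -/
def Rule.fv (r : Rule F arF Pc arP Prd arPrd) : Finset ℕ :=
  (Finset.univ.biUnion fun i => (r.hargs i).fv) ∪ r.con.fv ∪
    (Finset.univ.biUnion fun i => (r.bargs i).fv)

/-- Apply a variable substitution to a rule. -/
def Rule.rename (σ : ℕ → ℕ) (r : Rule F arF Pc arP Prd arPrd) : Rule F arF Pc arP Prd arPrd :=
  ⟨r.hp, fun i => (r.hargs i).rename σ, r.con.rename σ, r.bp, fun i => (r.bargs i).rename σ⟩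

/-- `r'` is a variant of `r`: obtained by renaming the variables by a bijection. -/
def Rule.IsVariant (r r' : Rule F arF Pc arP Prd arPrd) : Prop :=
  ∃ ρ : ℕ ≃ ℕ, r' = r.rename ρ

/-- The query `⟨H | c⟩` of a rule `H ← c ◇ B`. -/
def Rule.headQuery (r : Rule F arF Pc arP Prd arPrd) : Query F arF Pc arP Prd arPrd :=
  ⟨r.hp, r.hargs, r.con⟩

/-- The query `⟨B | c⟩` of a rule `H ← c ◇ B`. -/
def Rule.bodyQuery (r : Rule F arF Pc arP Prd arPrd) : Query F arF Pc arP Prd arPrd :=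
  ⟨r.bp, r.bargs, r.con⟩

/-- The constraint `ũ = w̃` for two sequences of terms. -/
def argsEqCon {n : ℕ} (u w : Fin n → Tm F arF) : Con F arF Pc arP :=
  (List.ofFn fun i => Con.eq (u i) (w i)).foldr .and .tru

/-- The constraint `s̃' = ũ ∧ c' ∧ d` of the query resulting from a derivation step of
`S = ⟨p(ũ) | d⟩` with input rule `r' = p(s̃') ← c' ◇ q(t̃')`. -/
def stepCon (r' : Rule F arF Pc arP Prd arPrd) (S : Query F arF Pc arP Prd arPrd)
    (h : r'.hp = S.p) : Con F arF Pc arP :=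
  Con.and
    (argsEqCon (fun i : Fin (arPrd S.p) => r'.hargs (Fin.cast (congrArg arPrd h).symm i)) S.args)
    (Con.and r'.con S.con)

/-- Derivation step of `S` using the (already renamed-apart) input rule `r'`:
the constraint `s̃' = ũ ∧ c' ∧ d` must be satisfiable in `D_C`, and the resulting
query is `⟨q(t̃') | s̃' = ũ ∧ c' ∧ d⟩`. -/
def StepWith (I : Interp F arF Pc arP D) (r' : Rule F arF Pc arP Prd arPrd)
    (S T : Query F arF Pc arP Prd arPrd) : Prop :=
  ∃ h : r'.hp = S.p, (∃ v : ℕ → D, (stepCon r' S h).Sat I v) ∧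
    T = ⟨r'.bp, r'.bargs, stepCon r' S h⟩

/-- Derivation step `S ⟹_r T`: there is a variant `r'` of `r`, variable disjoint
with `S`, which is an input rule for a step from `S` to `T`. -/
def Step (I : Interp F arF Pc arP D) (r : Rule F arF Pc arP Prd arPrd)
    (S T : Query F arF Pc arP Prd arPrd) : Prop :=
  ∃ r' : Rule F arF Pc arP Prd arPrd,
    r.IsVariant r' ∧ Disjoint r'.fv S.fv ∧ StepWith I r' S T

/-- `S₀` loops w.r.t. the program `P`: there is an infinite derivation of `P ∪ {S₀}`,
i.e. an infinite sequence of derivation steps whose input rules are variants of rules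
of `P`, variable disjoint from `S₀` and from the input rules used at earlier steps
(standardization apart). -/
def Loops (I : Interp F arF Pc arP D) (P : Set (Rule F arF Pc arP Prd arPrd))
    (S₀ : Query F arF Pc arP Prd arPrd) : Prop :=
  ∃ (S : ℕ → Query F arF Pc arP Prd arPrd) (rv : ℕ → Rule F arF Pc arP Prd arPrd),
    S 0 = S₀ ∧
    ∀ n : ℕ, (∃ r ∈ P, r.IsVariant (rv n)) ∧
      Disjoint (rv n).fv S₀.fv ∧ (∀ m < n, Disjoint (rv n).fv (rv m).fv) ∧
      StepWith I (rv n) (S n) (S (n + 1))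

/-! ## Sets of positions, projections, filters -/

/-- The set `[S|τ]` of projected atoms described by the projection of a query on a
set of positions `τ`. -/
def Query.projSet (I : Interp F arF Pc arP D) (τ : ∀ p : Prd, Set (Fin (arPrd p)))
    (S : Query F arF Pc arP Prd arPrd) :
    Set (Σ p : Prd, {i : Fin (arPrd p) // i ∈ τ p} → D) :=
  { a | ∃ v : ℕ → D, S.con.Sat I v ∧ a = ⟨S.p, fun i => (S.args i.1).eval I.fn v⟩ }

/-- The complement `τ̄` of a set of positions. -/
def complPos (τ : ∀ p : Prd, Set (Fin (arPrd p))) : ∀ p : Prd, Set (Fin (arPrd p)) :=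
  fun p => (τ p)ᶜ

/-- A query over a projected predicate `p|τ`. -/
structure PQuery (F : Type) (arF : F → ℕ) (Pc : Type) (arP : Pc → ℕ)
    {Prd : Type} {arPrd : Prd → ℕ} (τ : ∀ p : Prd, Set (Fin (arPrd p))) (p : Prd) where
  args : {i : Fin (arPrd p) // i ∈ τ p} → Tm F arF
  con : Con F arF Pc arP

/-- The set of projected atoms described by a projected query. -/
def PQuery.set (I : Interp F arF Pc arP D) {τ : ∀ p : Prd, Set (Fin (arPrd p))} {p : Prd}
    (Q : PQuery F arF Pc arP τ p) :
    Set (Σ q : Prd, {i : Fin (arPrd q) // i ∈ τ q} → D) :=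
  { a | ∃ v : ℕ → D, Q.con.Sat I v ∧ a = ⟨p, fun i => (Q.args i).eval I.fn v⟩ }

/-- A filter `Δ = (τ, δ)`: a set of positions together with, for each predicate `p`,
a query `δ(p)` over the projected predicate `p|τ` with satisfiable constraint. -/
structure Filt {F : Type} {arF : F → ℕ} {Pc : Type} {arP : Pc → ℕ} {D : Type}
    (I : Interp F arF Pc arP D) (Prd : Type) (arPrd : Prd → ℕ) where
  τ : ∀ p : Prd, Set (Fin (arPrd p))
  δ : ∀ p : Prd, PQuery F arF Pc arP τ p
  δ_sat : ∀ p : Prd, ∃ v : ℕ → D, (δ p).con.Sat I v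

variable {I : Interp F arF Pc arP D}

/-- A query `S` satisfies the filter `Δ` iff `[S|τ] ⊆ [δ(rel(S))]`. -/
def Filt.Satisfies (Δ : Filt I Prd arPrd) (S : Query F arF Pc arP Prd arPrd) : Prop :=
  S.projSet I Δ.τ ⊆ (Δ.δ S.p).set I

/-- `S'` is `Δ`-more general than `S`: `S'|τ̄` is more general than `S|τ̄`
and `S'` satisfies `Δ`. -/
def Filt.DeltaMoreGen (Δ : Filt I Prd arPrd) (S' S : Query F arF Pc arP Prd arPrd) : Prop :=
  S.projSet I (complPos Δ.τ) ⊆ S'.projSet I (complPos Δ.τ) ∧ Δ.Satisfies S'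

/-- `Δ` is derivation neutral (DN) for `r`. -/
def Filt.DN (Δ : Filt I Prd arPrd) (r : Rule F arF Pc arP Prd arPrd) : Prop :=
  ∀ S T, Step I r S T → ∀ S', Δ.DeltaMoreGen S' S →
    ∃ T', Step I r S' T' ∧ Δ.DeltaMoreGen T' T

/-! ## Normalized rules and DNlog -/

/-- A normalized rule `p(X̃) ← c ◇ q(Ỹ)` where `X̃, Ỹ` are disjoint sequences of
distinct variables. -/
structure NRule (F : Type) (arF : F → ℕ) (Pc : Type) (arP : Pc → ℕ)
    (Prd : Type) (arPrd : Prd → ℕ) where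
  hp : Prd
  X : Fin (arPrd hp) → ℕ
  bp : Prd
  Y : Fin (arPrd bp) → ℕ
  hX : Function.Injective X
  hY : Function.Injective Y
  hXY : ∀ i j, X i ≠ Y j
  con : Con F arF Pc arP

/-- The underlying rule of a normalized rule. -/
def NRule.toRule (r : NRule F arF Pc arP Prd arPrd) : Rule F arF Pc arP Prd arPrd :=
  ⟨r.hp, fun i => .var (r.X i), r.con, r.bp, fun i => .var (r.Y i)⟩

/-- `local_var(r) = Var(c) ∖ (Var(X̃) ∪ Var(Ỹ))`. -/
def NRule.localVar (r : NRule F arF Pc arP Prd arPrd) : Set ℕ :=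
  ↑r.con.fv \ (Set.range r.X ∪ Set.range r.Y)

/-- `v` and `w` agree on all variables outside `W`. -/
def agreesOff (W : Set ℕ) (v w : ℕ → D) : Prop := ∀ x ∉ W, v x = w x

/-- Semantics under `v` of the formula `sat(s̃, Q) = ∃_{Var(Q')} (s̃ = ũ' ∧ d')`,
`Q'` a variable-disjoint variant of `Q = ⟨p|τ(ũ) | d⟩`. -/
def satFor (I : Interp F arF Pc arP D) {τ : ∀ p : Prd, Set (Fin (arPrd p))} {p : Prd}
    (s : {i : Fin (arPrd p) // i ∈ τ p} → Tm F arF) (Q : PQuery F arF Pc arP τ p)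
    (v : ℕ → D) : Prop :=
  ∃ w : ℕ → D, Q.con.Sat I w ∧ ∀ i, (s i).eval I.fn v = (Q.args i).eval I.fn w

/-- `Δ` is DNlog for a normalized rule `r = p(X̃) ← c ◇ q(Ỹ)`:
`D_C ⊨ c → ∀_{X̃|τ} [ sat(X̃|τ, δ(p)) → ∃_Y (sat(Ỹ|τ, δ(q)) ∧ c) ]` where
`Y = Var(Ỹ|τ) ∪ local_var(r)`. -/
def Filt.DNlog (Δ : Filt I Prd arPrd) (r : NRule F arF Pc arP Prd arPrd) : Prop :=
  ∀ v : ℕ → D, r.con.Sat I v →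
    ∀ v₁ : ℕ → D, agreesOff (r.X '' Δ.τ r.hp) v₁ v →
      satFor I (fun i => Tm.var (r.X i.1)) (Δ.δ r.hp) v₁ →
        ∃ v₂ : ℕ → D,
          agreesOff (r.Y '' Δ.τ r.bp ∪ r.localVar) v₂ v₁ ∧
          satFor I (fun i => Tm.var (r.Y i.1)) (Δ.δ r.bp) v₂ ∧ r.con.Sat I v₂

/-! ## Flat rules and DNsyn -/

/-- Variables of a sequence of terms. -/
def varsOf {n : ℕ} (s : Fin n → Tm F arF) : Finset ℕ :=
  Finset.univ.biUnion fun i => (s i).fv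

/-- Variables of the projection of a sequence of terms on a set of positions. -/
def varsOfProj {n : ℕ} (σ : Set (Fin n)) (s : Fin n → Tm F arF) : Set ℕ :=
  ⋃ i : {i : Fin n // i ∈ σ}, ↑(s i.1).fv

/-- A flat rule `p(X̃) ← (X̃ = s̃ ∧ Ỹ = t̃) ◇ q(Ỹ)` with `Var(s̃, t̃)` local. -/
structure FlatRule (F : Type) (arF : F → ℕ) (Pc : Type) (arP : Pc → ℕ)
    (Prd : Type) (arPrd : Prd → ℕ) extends NRule F arF Pc arP Prd arPrd where
  s : Fin (arPrd hp) → Tm F arF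
  t : Fin (arPrd bp) → Tm F arF
  con_eq : con = Con.and (argsEqCon (fun i => Tm.var (X i)) s)
                         (argsEqCon (fun i => Tm.var (Y i)) t)
  local_args : ∀ x ∈ varsOf s ∪ varsOf t, x ∉ Set.range X ∪ Set.range Y

/-! ## The constraint domain Term (logic programming) -/

/-- Finite trees (ground terms) over `F`. -/
inductive GTm (F : Type) (arF : F → ℕ) : Type
  | app : (f : F) → (Fin (arF f) → GTm F arF) → GTm F arF

/-- Arities for the empty set of constraint-predicate symbols (only `=` is available). -/
def emptyAr : Empty → ℕ := fun c => c.elim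

/-- The domain of computation of the constraint domain `Term`: the algebra of
finite trees, with no primitive constraints but equality. -/
def termInterp (F : Type) (arF : F → ℕ) : Interp F arF Empty emptyAr (GTm F arF) :=
  ⟨fun f ts => GTm.app f ts, fun c => c.elim⟩

/-! ## Auxiliary lemmas for stmt2 -/

theorem Tm.eval_rename (If : (f : F) → (Fin (arF f) → D) → D) (σ : ℕ → ℕ) (v : ℕ → D)
    (t : Tm F arF) : (t.rename σ).eval If v = t.eval If (fun x => v (σ x)) := by
  induction t with
  | var x => rfl
  | app f ts ih => simp only [Tm.rename, Tm.eval]; congr 1; funext i; exact ih i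

theorem Con.sat_rename (σ : ℕ → ℕ) (v : ℕ → D) (c : Con F arF Pc arP) :
    (c.rename σ).Sat I v ↔ c.Sat I (fun x => v (σ x)) := by
  induction c with
  | tru => simp [Con.rename, Con.Sat]
  | eq s t => simp [Con.rename, Con.Sat, Tm.eval_rename]
  | prim c ts => simp [Con.rename, Con.Sat, Tm.eval_rename]
  | and c d ihc ihd => simp [Con.rename, Con.Sat, ihc, ihd]

theorem Tm.eval_congr (If : (f : F) → (Fin (arF f) → D) → D) {v w : ℕ → D}
    (t : Tm F arF) (h : ∀ x ∈ t.fv, v x = w x) : t.eval If v = t.eval If w := by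
  induction t with
  | var x => exact h x (by simp [Tm.fv])
  | app f ts ih =>
    simp only [Tm.eval]; congr 1; funext i
    exact ih i fun x hx => h x (by simp only [Tm.fv, Finset.mem_biUnion]; exact ⟨i, Finset.mem_univ i, hx⟩)

theorem Con.sat_congr {v w : ℕ → D} (c : Con F arF Pc arP)
    (h : ∀ x ∈ c.fv, v x = w x) : c.Sat I v ↔ c.Sat I w := by
  induction c with
  | tru => simp [Con.Sat]
  | eq s t =>
    simp only [Con.Sat]
    rw [Tm.eval_congr I.fn s fun x hx => h x (by simp [Con.fv, hx]),
        Tm.eval_congr I.fn t fun x hx => h x (by simp [Con.fv, hx])]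
  | prim c ts =>
    simp only [Con.Sat]
    have : ∀ i, (ts i).eval I.fn v = (ts i).eval I.fn w := fun i =>
      Tm.eval_congr I.fn (ts i) fun x hx => h x
        (by simp only [Con.fv, Finset.mem_biUnion]; exact ⟨i, Finset.mem_univ i, hx⟩)
    rw [show (fun i => (ts i).eval I.fn v) = fun i => (ts i).eval I.fn w from funext this]
  | and c d ihc ihd =>
    simp only [Con.Sat]
    rw [ihc fun x hx => h x (by simp [Con.fv, hx]), ihd fun x hx => h x (by simp [Con.fv, hx])]

theorem Tm.mem_fv_rename {σ : ℕ → ℕ} {t : Tm F arF} {x : ℕ} (h : x ∈ (t.rename σ).fv) :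
    ∃ y ∈ t.fv, x = σ y := by
  induction t with
  | var y => simp [Tm.rename, Tm.fv] at h ⊢; omega
  | app f ts ih =>
    simp only [Tm.rename, Tm.fv, Finset.mem_biUnion] at h
    obtain ⟨i, -, hi⟩ := h
    obtain ⟨y, hy, hxy⟩ := ih i hi
    exact ⟨y, by simp only [Tm.fv, Finset.mem_biUnion]; exact ⟨i, Finset.mem_univ i, hy⟩, hxy⟩

theorem Con.mem_fv_rename {σ : ℕ → ℕ} {c : Con F arF Pc arP} {x : ℕ}
    (h : x ∈ (c.rename σ).fv) : ∃ y ∈ c.fv, x = σ y := by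
  induction c with
  | tru => simp [Con.rename, Con.fv] at h
  | eq s t =>
    simp only [Con.rename, Con.fv, Finset.mem_union] at h
    rcases h with h | h
    · obtain ⟨y, hy, hxy⟩ := Tm.mem_fv_rename h
      exact ⟨y, by simp [Con.fv, hy], hxy⟩
    · obtain ⟨y, hy, hxy⟩ := Tm.mem_fv_rename h
      exact ⟨y, by simp [Con.fv, hy], hxy⟩
  | prim c ts =>
    simp only [Con.rename, Con.fv, Finset.mem_biUnion] at h
    obtain ⟨i, -, hi⟩ := h
    obtain ⟨y, hy, hxy⟩ := Tm.mem_fv_rename hi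
    exact ⟨y, by simp only [Con.fv, Finset.mem_biUnion]; exact ⟨i, Finset.mem_univ i, hy⟩, hxy⟩
  | and c d ihc ihd =>
    simp only [Con.rename, Con.fv, Finset.mem_union] at h
    rcases h with h | h
    · obtain ⟨y, hy, hxy⟩ := ihc h
      exact ⟨y, by simp [Con.fv, hy], hxy⟩
    · obtain ⟨y, hy, hxy⟩ := ihd h
      exact ⟨y, by simp [Con.fv, hy], hxy⟩

theorem Rule.mem_fv_rename {σ : ℕ → ℕ} {r : Rule F arF Pc arP Prd arPrd} {x : ℕ}
    (h : x ∈ (r.rename σ).fv) : ∃ y ∈ r.fv, x = σ y := by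
  simp only [Rule.rename, Rule.fv, Finset.mem_union, Finset.mem_biUnion] at h
  rcases h with (⟨i, -, hi⟩ | h) | ⟨i, -, hi⟩
  · obtain ⟨y, hy, hxy⟩ := Tm.mem_fv_rename hi
    refine ⟨y, ?_, hxy⟩
    simp only [Rule.fv, Finset.mem_union, Finset.mem_biUnion]
    exact Or.inl (Or.inl ⟨i, Finset.mem_univ i, hy⟩)
  · obtain ⟨y, hy, hxy⟩ := Con.mem_fv_rename h
    refine ⟨y, ?_, hxy⟩
    simp only [Rule.fv, Finset.mem_union]
    exact Or.inl (Or.inr hy)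
  · obtain ⟨y, hy, hxy⟩ := Tm.mem_fv_rename hi
    refine ⟨y, ?_, hxy⟩
    simp only [Rule.fv, Finset.mem_union, Finset.mem_biUnion]
    exact Or.inr ⟨i, Finset.mem_univ i, hy⟩

theorem foldr_and_sat (v : ℕ → D) (l : List (Con F arF Pc arP)) :
    (l.foldr Con.and Con.tru).Sat I v ↔ ∀ c ∈ l, c.Sat I v := by
  induction l with
  | nil => simp [Con.Sat]
  | cons a l ih => simp [Con.Sat, ih]

theorem argsEqCon_sat (v : ℕ → D) {n : ℕ} (u w : Fin n → Tm F arF) :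
    (argsEqCon (Pc := Pc) (arP := arP) u w).Sat I v ↔
      ∀ i, (u i).eval I.fn v = (w i).eval I.fn v := by
  rw [argsEqCon, foldr_and_sat]
  constructor
  · intro h i
    exact h _ (by simp only [List.mem_ofFn]; exact ⟨i, rfl⟩)
  · intro h c hc
    simp only [List.mem_ofFn] at hc
    obtain ⟨i, rfl⟩ := hc
    exact h i

/-- A bijection of variables swapping `[0, N)` with `[N, 2N)`. -/
def shiftEquiv (N : ℕ) : ℕ ≃ ℕ where
  toFun x := if x < N then x + N else if x < 2 * N then x - N else x
  invFun x := if x < N then x + N else if x < 2 * N then x - N else x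
  left_inv x := by dsimp only; split_ifs <;> omega
  right_inv x := by dsimp only; split_ifs <;> omega

theorem shiftEquiv_lt {N x : ℕ} (h : x < N) : shiftEquiv N x = x + N := by
  simp [shiftEquiv, h]

end CLP
open CLP in
/-- there exists a derivation step of `S` w.r.t. `r = H ← c ◇ B`
iff `[S] ∩ [⟨H | c⟩] ≠ ∅`. -/
theorem stmt2 {F : Type} {arF : F → ℕ} {Pc : Type} {arP : Pc → ℕ}
    {Prd : Type} {arPrd : Prd → ℕ} {D : Type} (I : Interp F arF Pc arP D)
    (r : Rule F arF Pc arP Prd arPrd) (S : Query F arF Pc arP Prd arPrd) :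
    (∃ T, Step I r S T) ↔ S.set I ∩ r.headQuery.set I ≠ ∅ := by
  rw [← Set.nonempty_iff_ne_empty]
  obtain ⟨p, args, d⟩ := S
  obtain ⟨hp, hargs, c, bp, bargs⟩ := r
  constructor
  · rintro ⟨T, r', ⟨ρ, rfl⟩, hdisj, h, ⟨v, hv⟩, rfl⟩
    have hp_eq : hp = p := h
    subst hp_eq
    obtain ⟨heq, hc', hd⟩ := hv
    rw [argsEqCon_sat] at heq
    refine ⟨⟨hp, fun i => (args i).eval I.fn v⟩, ⟨v, hd, rfl⟩,
      fun x => v (ρ x), (Con.sat_rename ρ v c).mp hc', ?_⟩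
    simp only [Rule.headQuery, Rule.rename]
    congr 1
    funext i
    exact ((Tm.eval_rename I.fn (⇑ρ) v (hargs i)).symm.trans (heq i)).symm
  · rintro ⟨a, ⟨v, hdv, rfl⟩, w, hcw, hEq⟩
    rw [Sigma.mk.inj_iff] at hEq
    obtain ⟨hp_eq, hEq2⟩ := hEq
    subst hp_eq
    have hargsEq : ∀ i, (args i).eval I.fn v = (hargs i).eval I.fn w :=
      fun i => congrFun (eq_of_heq hEq2) i
    -- fresh renaming
    obtain ⟨N, hbound⟩ : ∃ N : ℕ,
        ∀ x ∈ ((⟨p, args, d⟩ : Query F arF Pc arP Prd arPrd).fv ∪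
          (⟨p, hargs, c, bp, bargs⟩ : Rule F arF Pc arP Prd arPrd).fv), x < N :=
      ⟨_ + 1, fun x hx => Nat.lt_succ_of_le (by simpa using Finset.le_sup (f := id) hx)⟩
    have hbS : ∀ x ∈ (⟨p, args, d⟩ : Query F arF Pc arP Prd arPrd).fv, x < N :=
      fun x hx => hbound x (Finset.mem_union_left _ hx)
    have hbR : ∀ x ∈ (⟨p, hargs, c, bp, bargs⟩ : Rule F arF Pc arP Prd arPrd).fv, x < N :=
      fun x hx => hbound x (Finset.mem_union_right _ hx)
    set u : ℕ → D := fun x => if x < N then v x else if x < 2 * N then w (x - N) else v x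
      with hu
    have huρ : ∀ x ∈ (⟨p, hargs, c, bp, bargs⟩ : Rule F arF Pc arP Prd arPrd).fv,
        u (shiftEquiv N x) = w x := by
      intro x hx
      have hxN : x < N := hbR x hx
      rw [shiftEquiv_lt hxN, hu]
      simp only
      rw [if_neg (by omega), if_pos (by omega)]
      congr 1; omega
    have huS : ∀ x ∈ (⟨p, args, d⟩ : Query F arF Pc arP Prd arPrd).fv, u x = v x := by
      intro x hx
      have hxN : x < N := hbS x hx
      rw [hu]; simp only [if_pos hxN]
    have h : ((⟨p, hargs, c, bp, bargs⟩ : Rule F arF Pc arP Prd arPrd).rename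
        (shiftEquiv N)).hp = (⟨p, args, d⟩ : Query F arF Pc arP Prd arPrd).p := rfl
    refine ⟨_, (⟨p, hargs, c, bp, bargs⟩ : Rule F arF Pc arP Prd arPrd).rename (shiftEquiv N),
      ⟨shiftEquiv N, rfl⟩, ?_, h, ⟨u, ?_, ?_, ?_⟩, rfl⟩
    · -- disjointness
      rw [Finset.disjoint_left]
      intro x hx hxS
      obtain ⟨y, hy, rfl⟩ := Rule.mem_fv_rename hx
      have hyN : y < N := hbR y hy
      have hxN : shiftEquiv N y < N := hbS _ hxS
      rw [shiftEquiv_lt hyN] at hxN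
      omega
    · -- argsEqCon
      rw [argsEqCon_sat]
      intro i
      have e1 : (hargs i).eval I.fn (fun x => u (shiftEquiv N x)) = (hargs i).eval I.fn w := by
        apply Tm.eval_congr
        intro x hx
        apply huρ
        simp only [Rule.fv, Finset.mem_union, Finset.mem_biUnion]
        exact Or.inl (Or.inl ⟨i, Finset.mem_univ i, hx⟩)
      have e2 : (args i).eval I.fn u = (args i).eval I.fn v := by
        apply Tm.eval_congr
        intro x hx
        apply huS
        simp only [Query.fv, Finset.mem_union, Finset.mem_biUnion]
        exact Or.inl ⟨i, Finset.mem_univ i, hx⟩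
      calc ((hargs i).rename (shiftEquiv N)).eval I.fn u
          = (hargs i).eval I.fn (fun x => u (shiftEquiv N x)) := Tm.eval_rename _ _ _ _
        _ = (hargs i).eval I.fn w := e1
        _ = (args i).eval I.fn v := (hargsEq i).symm
        _ = (args i).eval I.fn u := e2.symm
    · -- rule constraint
      rw [show ((⟨p, hargs, c, bp, bargs⟩ : Rule F arF Pc arP Prd arPrd).rename
          (shiftEquiv N)).con = c.rename (shiftEquiv N) from rfl, Con.sat_rename]
      rw [Con.sat_congr (v := fun x => u (shiftEquiv N x)) (w := w) c]
      · exact hcw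
      · intro x hx
        apply huρ
        simp only [Rule.fv, Finset.mem_union]
        exact Or.inl (Or.inr hx)
    · -- query constraint
      rw [Con.sat_congr (v := u) (w := v) d]
      · exact hdv
      · intro x hx
        apply huS
        simp only [Query.fv, Finset.mem_union]
        exact Or.inr hx
end

section
/- Let r := H ← c ◇ B be a binary rule. If the query ⟨B | c⟩ is more general than ⟨H | c⟩ (i.e. [⟨H|c⟩] ⊆ [⟨B|c⟩]), then ⟨H | c⟩ loops with respect to {r}, i.e. there exists an infinite derivation of {r} ∪ {⟨H|c⟩}. -/
/- A formalization of binary CLP(C): terms, constraints, queries, rules,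
   derivation steps, loops, projections, filters, DN / DNlog / DNsyn. -/

namespace CLP

variable {F : Type} {arF : F → ℕ} {Pc : Type} {arP : Pc → ℕ}
  {Prd : Type} {arPrd : Prd → ℕ} {D : Type}

variable {I : Interp F arF Pc arP D}

/-! ## Auxiliary material for stmt5 -/

section Stmt5Aux

variable {F : Type} {arF : F → ℕ} {Pc : Type} {arP : Pc → ℕ}
  {Prd : Type} {arPrd : Prd → ℕ} {D : Type}

lemma tm_eval_rename (If : (f : F) → (Fin (arF f) → D) → D) (σ : ℕ → ℕ) (v : ℕ → D) :
    ∀ t : Tm F arF, (t.rename σ).eval If v = t.eval If (fun x => v (σ x))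
  | .var _ => rfl
  | .app f ts => by
      simp only [Tm.rename, Tm.eval]
      congr 1; funext i; exact tm_eval_rename If σ v (ts i)

lemma tm_eval_congr (If : (f : F) → (Fin (arF f) → D) → D) {v w : ℕ → D} :
    ∀ t : Tm F arF, (∀ x ∈ t.fv, v x = w x) → t.eval If v = t.eval If w
  | .var x, h => h x (by simp [Tm.fv])
  | .app f ts, h => by
      simp only [Tm.eval]
      congr 1; funext i
      exact tm_eval_congr If (ts i) (fun x hx => h x (by
        simp only [Tm.fv, Finset.mem_biUnion, Finset.mem_univ, true_and]
        exact ⟨i, hx⟩))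

lemma tm_fv_rename (σ : ℕ → ℕ) :
    ∀ t : Tm F arF, (t.rename σ).fv = t.fv.image σ
  | .var x => by simp [Tm.rename, Tm.fv]
  | .app f ts => by
      simp only [Tm.rename, Tm.fv]
      rw [Finset.biUnion_image]
      exact Finset.biUnion_congr rfl (fun i _ => tm_fv_rename σ (ts i))

lemma con_sat_rename (I : Interp F arF Pc arP D) (σ : ℕ → ℕ) (v : ℕ → D) :
    ∀ c : Con F arF Pc arP, (c.rename σ).Sat I v ↔ c.Sat I (fun x => v (σ x))
  | .tru => Iff.rfl
  | .eq s t => by simp [Con.rename, Con.Sat, tm_eval_rename]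
  | .prim c ts => by simp [Con.rename, Con.Sat, tm_eval_rename]
  | .and c d => by
      simp only [Con.rename, Con.Sat]
      exact and_congr (con_sat_rename I σ v c) (con_sat_rename I σ v d)

lemma con_sat_congr (I : Interp F arF Pc arP D) {v w : ℕ → D} :
    ∀ c : Con F arF Pc arP, (∀ x ∈ c.fv, v x = w x) → (c.Sat I v ↔ c.Sat I w)
  | .tru, _ => Iff.rfl
  | .eq s t, h => by
      simp only [Con.Sat]
      rw [tm_eval_congr I.fn s (fun x hx => h x (by simp [Con.fv]; exact Or.inl hx)),
          tm_eval_congr I.fn t (fun x hx => h x (by simp [Con.fv]; exact Or.inr hx))]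
  | .prim c ts, h => by
      simp only [Con.Sat]
      have he : ∀ i, (ts i).eval I.fn v = (ts i).eval I.fn w := fun i =>
        tm_eval_congr I.fn (ts i) (fun x hx => h x (by
          simp only [Con.fv, Finset.mem_biUnion, Finset.mem_univ, true_and]
          exact ⟨i, hx⟩))
      rw [show (fun i => (ts i).eval I.fn v) = fun i => (ts i).eval I.fn w from funext he]
  | .and c d, h => by
      simp only [Con.Sat]
      exact and_congr
        (con_sat_congr I c (fun x hx => h x (by simp [Con.fv]; exact Or.inl hx)))
        (con_sat_congr I d (fun x hx => h x (by simp [Con.fv]; exact Or.inr hx)))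

lemma con_fv_rename (σ : ℕ → ℕ) :
    ∀ c : Con F arF Pc arP, (c.rename σ).fv = c.fv.image σ
  | .tru => by simp [Con.rename, Con.fv]
  | .eq s t => by
      simp only [Con.rename, Con.fv, tm_fv_rename, Finset.image_union]
  | .prim c ts => by
      simp only [Con.rename, Con.fv]
      rw [Finset.biUnion_image]
      exact Finset.biUnion_congr rfl (fun i _ => tm_fv_rename σ (ts i))
  | .and c d => by
      simp only [Con.rename, Con.fv, Finset.image_union,
        con_fv_rename σ c, con_fv_rename σ d]

lemma rule_fv_rename (σ : ℕ → ℕ) (r : Rule F arF Pc arP Prd arPrd) :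
    (r.rename σ).fv = r.fv.image σ := by
  simp only [Rule.rename, Rule.fv, Finset.image_union]
  rw [Finset.biUnion_image, Finset.biUnion_image]
  congr 1
  · congr 1
    · exact Finset.biUnion_congr rfl (fun i _ => tm_fv_rename σ (r.hargs i))
    · exact con_fv_rename σ r.con
  · exact Finset.biUnion_congr rfl (fun i _ => tm_fv_rename σ (r.bargs i))

lemma sat_foldr (I : Interp F arF Pc arP D) (v : ℕ → D) (l : List (Con F arF Pc arP)) :
    ((l.foldr Con.and Con.tru).Sat I v) ↔ ∀ c ∈ l, c.Sat I v := by
  induction l with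
  | nil => simp [Con.Sat]
  | cons a l ih => simp [Con.Sat, ih]

lemma sat_argsEqCon (I : Interp F arF Pc arP D) (v : ℕ → D) {n : ℕ}
    (u w : Fin n → Tm F arF) :
    (argsEqCon u w : Con F arF Pc arP).Sat I v ↔
      ∀ i, (u i).eval I.fn v = (w i).eval I.fn v := by
  rw [argsEqCon, sat_foldr]
  constructor
  · intro h i
    exact h _ (by simp only [List.mem_ofFn]; exact ⟨i, rfl⟩)
  · intro h c hc
    simp only [List.mem_ofFn] at hc
    obtain ⟨i, rfl⟩ := hc
    exact h i

lemma mem_fv_foldr {x : ℕ} (l : List (Con F arF Pc arP)) :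
    x ∈ (l.foldr Con.and Con.tru).fv ↔ ∃ c ∈ l, x ∈ c.fv := by
  induction l with
  | nil => simp [Con.fv]
  | cons a l ih => simp [Con.fv, ih]

/-- Swap of the blocks `[0,N)` and `[M, M+N)` of `ℕ`. -/
def blockSwap (N M : ℕ) : ℕ → ℕ := fun x =>
  if x < N then x + M else if M ≤ x ∧ x < M + N then x - M else x

lemma blockSwap_invol {N M : ℕ} (h : N ≤ M) : Function.Involutive (blockSwap N M) := by
  intro x
  simp only [blockSwap]
  split_ifs <;> omega

/-- The chain of queries of the derivation constructed in stmt5. -/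
def chainQ (p : Prd) (H : Fin (arPrd p) → Tm F arF) (c : Con F arF Pc arP)
    (rv : ℕ → Rule F arF Pc arP Prd arPrd)
    (hhp : ∀ n, (rv n).hp = p) (hbp : ∀ n, (rv n).bp = p) :
    ℕ → {Q : Query F arF Pc arP Prd arPrd // Q.p = p}
  | 0 => ⟨⟨p, H, c⟩, rfl⟩
  | n+1 =>
    ⟨⟨(rv n).bp, (rv n).bargs,
      stepCon (rv n) (chainQ p H c rv hhp hbp n).1
        ((hhp n).trans ((chainQ p H c rv hhp hbp n).2.symm))⟩, hbp n⟩

lemma fv_next_subset (r' : Rule F arF Pc arP Prd arPrd)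
    (Q : Query F arF Pc arP Prd arPrd) (h : r'.hp = Q.p) :
    (⟨r'.bp, r'.bargs, stepCon r' Q h⟩ : Query F arF Pc arP Prd arPrd).fv ⊆
      r'.fv ∪ Q.fv := by
  intro x hx
  simp only [Query.fv, stepCon, argsEqCon, Con.fv, Finset.mem_union,
    Finset.mem_biUnion, Finset.mem_univ, true_and, mem_fv_foldr, List.mem_ofFn] at hx
  simp only [Rule.fv, Query.fv, Finset.mem_union, Finset.mem_biUnion,
    Finset.mem_univ, true_and]
  rcases hx with ⟨i, hi⟩ | (⟨cc, ⟨i, rfl⟩, hcc⟩ | (hc | hq))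
  · exact Or.inl (Or.inr ⟨i, hi⟩)
  · simp only [Con.fv, Finset.mem_union] at hcc
    rcases hcc with h1 | h1
    · exact Or.inl (Or.inl (Or.inl ⟨_, h1⟩))
    · exact Or.inr (Or.inl ⟨i, h1⟩)
  · exact Or.inl (Or.inl (Or.inr hc))
  · exact Or.inr (Or.inr hq)

lemma step_exists (I : Interp F arF Pc arP D) {p : Prd}
    (H B : Fin (arPrd p) → Tm F arF) (c : Con F arF Pc arP) (σ : ℕ ≃ ℕ)
    (Q : Query F arF Pc arP Prd arPrd) (hQp : Q.p = p)
    (hdisj : ∀ x ∈ (Rule.rename σ ⟨p, H, c, p, B⟩ : Rule F arF Pc arP Prd arPrd).fv,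
      x ∉ Q.fv)
    (u : ℕ → D) (hu : c.Sat I u)
    (hmem : (⟨p, fun i => (H i).eval I.fn u⟩ : Σ q : Prd, Fin (arPrd q) → D) ∈ Q.set I)
    (h : (Rule.rename σ (⟨p, H, c, p, B⟩ : Rule F arF Pc arP Prd arPrd)).hp = Q.p) :
    ∃ w : ℕ → D,
      (stepCon (Rule.rename σ ⟨p, H, c, p, B⟩) Q h).Sat I w ∧
      ∀ i, ((Rule.rename σ (⟨p, H, c, p, B⟩ : Rule F arF Pc arP Prd arPrd)).bargs i).eval
        I.fn w = (B i).eval I.fn u := by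
  classical
  obtain ⟨qp, qargs, qcon⟩ := Q
  have hq : p = qp := hQp.symm
  subst hq
  obtain ⟨v', hv', heq⟩ := hmem
  have h2 : (fun i => (H i).eval I.fn u) = fun i => (qargs i).eval I.fn v' := by
    simpa using heq
  set r : Rule F arF Pc arP Prd arPrd := ⟨p, H, c, p, B⟩ with hrdef
  set w : ℕ → D := fun x => if x ∈ (r.rename σ).fv then u (σ.symm x) else v' x with hwdef
  have hwσ : ∀ x ∈ r.fv, w (σ x) = u x := by
    intro x hx
    have hmem' : σ x ∈ (r.rename σ).fv := by
      rw [rule_fv_rename]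
      exact Finset.mem_image_of_mem σ hx
    simp only [hwdef, if_pos hmem', Equiv.symm_apply_apply]
  have hwq : ∀ x ∈ (⟨p, qargs, qcon⟩ : Query F arF Pc arP Prd arPrd).fv, w x = v' x := by
    intro x hx
    have : x ∉ (r.rename σ).fv := fun hxr => hdisj x hxr hx
    simp only [hwdef, if_neg this]
  have hHfv : ∀ i, ∀ x ∈ (H i).fv, x ∈ r.fv := by
    intro i x hx
    simp only [hrdef, Rule.fv, Finset.mem_union, Finset.mem_biUnion, Finset.mem_univ,
      true_and]
    exact Or.inl (Or.inl ⟨i, hx⟩)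
  have hBfv : ∀ i, ∀ x ∈ (B i).fv, x ∈ r.fv := by
    intro i x hx
    simp only [hrdef, Rule.fv, Finset.mem_union, Finset.mem_biUnion, Finset.mem_univ,
      true_and]
    exact Or.inr ⟨i, hx⟩
  have hcfv : ∀ x ∈ c.fv, x ∈ r.fv := by
    intro x hx
    simp only [hrdef, Rule.fv, Finset.mem_union]
    exact Or.inl (Or.inr hx)
  have hqargsfv : ∀ i, ∀ x ∈ (qargs i).fv,
      x ∈ (⟨p, qargs, qcon⟩ : Query F arF Pc arP Prd arPrd).fv := by
    intro i x hx
    simp only [Query.fv, Finset.mem_union, Finset.mem_biUnion, Finset.mem_univ, true_and]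
    exact Or.inl ⟨i, hx⟩
  have hqconfv : ∀ x ∈ qcon.fv,
      x ∈ (⟨p, qargs, qcon⟩ : Query F arF Pc arP Prd arPrd).fv := by
    intro x hx
    simp only [Query.fv, Finset.mem_union]
    exact Or.inr hx
  have hb : ∀ i, ((r.rename σ).bargs i).eval I.fn w = (B i).eval I.fn u := by
    intro i
    show ((B i).rename σ).eval I.fn w = (B i).eval I.fn u
    rw [tm_eval_rename]
    exact tm_eval_congr I.fn (B i) (fun x hx => hwσ x (hBfv i x hx))
  refine ⟨w, ?_, hb⟩
  show ((argsEqCon _ qargs).and ((c.rename σ).and qcon)).Sat I w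
  refine ⟨?_, ?_, ?_⟩
  · rw [sat_argsEqCon]
    intro i
    have hcast : (Fin.cast (congrArg arPrd h).symm i) = i := Fin.ext rfl
    rw [hcast]
    show ((H i).rename σ).eval I.fn w = (qargs i).eval I.fn w
    rw [tm_eval_rename]
    rw [tm_eval_congr I.fn (H i) (fun x hx => hwσ x (hHfv i x hx))]
    rw [congrFun h2 i]
    exact (tm_eval_congr I.fn (qargs i)
      (fun x hx => hwq x (hqargsfv i x hx))).symm
  · rw [con_sat_rename]
    exact (con_sat_congr I c (fun x hx => hwσ x (hcfv x hx))).mpr hu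
  · exact (con_sat_congr I qcon (fun x hx => hwq x (hqconfv x hx))).mpr hv'

theorem stmt5_aux (I : Interp F arF Pc arP D) (p : Prd)
    (H B : Fin (arPrd p) → Tm F arF) (c : Con F arF Pc arP)
    (hc : ∃ v : ℕ → D, c.Sat I v)
    (hmg : Query.set I (⟨p, H, c⟩ : Query F arF Pc arP Prd arPrd) ⊆
      Query.set I (⟨p, B, c⟩ : Query F arF Pc arP Prd arPrd)) :
    Loops I {(⟨p, H, c, p, B⟩ : Rule F arF Pc arP Prd arPrd)}
      (⟨p, H, c⟩ : Query F arF Pc arP Prd arPrd) := by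
  classical
  obtain ⟨v0, hv0⟩ := hc
  set r : Rule F arF Pc arP Prd arPrd := ⟨p, H, c, p, B⟩ with hrdef
  set N : ℕ := r.fv.sup id + 1 with hNdef
  have hrN : ∀ x ∈ r.fv, x < N := fun x hx =>
    Nat.lt_succ_of_le (Finset.le_sup (f := id) hx)
  have hNM : ∀ n : ℕ, N ≤ (n + 1) * N := fun n =>
    Nat.le_mul_of_pos_left N (Nat.succ_pos n)
  set π : ℕ → ℕ ≃ ℕ := fun n =>
    Function.Involutive.toPerm _ (blockSwap_invol (hNM n)) with hπdef
  set rv : ℕ → Rule F arF Pc arP Prd arPrd := fun n => r.rename (π n) with hrvdef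
  have hrvfv : ∀ n, ∀ x ∈ (rv n).fv, (n + 1) * N ≤ x ∧ x < (n + 1) * N + N := by
    intro n x hx
    rw [hrvdef, rule_fv_rename, Finset.mem_image] at hx
    obtain ⟨y, hy, rfl⟩ := hx
    have hyN := hrN y hy
    have hval : π n y = y + (n + 1) * N := by
      show blockSwap N ((n + 1) * N) y = y + (n + 1) * N
      simp [blockSwap, hyN]
    rw [hval]
    refine ⟨Nat.le_add_left _ _, ?_⟩
    calc y + (n + 1) * N < N + (n + 1) * N := Nat.add_lt_add_right hyN _
    _ = (n + 1) * N + N := Nat.add_comm _ _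
  have hhp : ∀ n, (rv n).hp = p := fun n => rfl
  have hbp : ∀ n, (rv n).bp = p := fun n => rfl
  set SQ := chainQ p H c rv hhp hbp with hSQdef
  have hhdfv : ∀ x ∈ (⟨p, H, c⟩ : Query F arF Pc arP Prd arPrd).fv, x ∈ r.fv := by
    intro x hx
    simp only [Query.fv, Finset.mem_union, Finset.mem_biUnion, Finset.mem_univ,
      true_and] at hx
    simp only [hrdef, Rule.fv, Finset.mem_union, Finset.mem_biUnion, Finset.mem_univ,
      true_and]
    rcases hx with h1 | h1
    · exact Or.inl (Or.inl h1)
    · exact Or.inl (Or.inr h1)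
  have main : ∀ n,
      (Query.set I (⟨p, H, c⟩ : Query F arF Pc arP Prd arPrd) ⊆ ((SQ n).1).set I) ∧
      (∀ x ∈ (SQ n).1.fv, x < (n + 1) * N) := by
    intro n
    induction n with
    | zero =>
      refine ⟨subset_rfl, ?_⟩
      intro x hx
      have := hrN x (hhdfv x hx)
      omega
    | succ n ih =>
      obtain ⟨hinv, hbd⟩ := ih
      have hdisj : ∀ x ∈ (rv n).fv, x ∉ (SQ n).1.fv := fun x hx hmem =>
        absurd (hbd x hmem) (not_lt.2 (hrvfv n x hx).1)
      have hstep : ∀ u : ℕ → D, c.Sat I u →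
          ((⟨p, fun i => (H i).eval I.fn u⟩ : Σ q : Prd, Fin (arPrd q) → D) ∈
            ((SQ n).1).set I) →
          ∃ w, (stepCon (rv n) (SQ n).1 ((hhp n).trans ((SQ n).2.symm))).Sat I w ∧
            ∀ i, ((rv n).bargs i).eval I.fn w = (B i).eval I.fn u := by
        intro u hu hm
        exact step_exists I H B c (π n) (SQ n).1 (SQ n).2 hdisj u hu hm _
      constructor
      · intro a ha
        obtain ⟨u, hu, haB⟩ := hmg ha
        have hm : (⟨p, fun i => (H i).eval I.fn u⟩ : Σ q : Prd, Fin (arPrd q) → D) ∈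
            Query.set I (⟨p, H, c⟩ : Query F arF Pc arP Prd arPrd) := ⟨u, hu, rfl⟩
        obtain ⟨w, hw, hwB⟩ := hstep u hu (hinv hm)
        refine ⟨w, hw, ?_⟩
        rw [haB]
        exact congrArg (Sigma.mk p) (funext fun i => (hwB i).symm)
      · intro x hx
        have hxm := fv_next_subset (rv n) (SQ n).1 ((hhp n).trans ((SQ n).2.symm)) hx
        rcases Finset.mem_union.1 hxm with h1 | h1
        · have h2 := (hrvfv n x h1).2
          have h3 : (n + 1) * N + N = (n + 1 + 1) * N := by ring
          omega
        · have h2 := hbd x h1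
          have h3 : (n + 1) * N ≤ (n + 1 + 1) * N :=
            Nat.mul_le_mul_right N (by omega)
          omega
  refine ⟨fun n => (SQ n).1, rv, rfl, fun n => ⟨⟨r, rfl, ⟨π n, rfl⟩⟩, ?_, ?_, ?_⟩⟩
  · rw [Finset.disjoint_left]
    intro x hx hx0
    have h1 := (hrvfv n x hx).1
    have h2 := hrN x (hhdfv x hx0)
    have h3 := hNM n
    omega
  · intro m hm
    rw [Finset.disjoint_left]
    intro x hx hxm
    have h1 := (hrvfv n x hx).1
    have h2 := (hrvfv m x hxm).2
    have h3 : (m + 1) * N + N = (m + 2) * N := by ring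
    have h4 : (m + 2) * N ≤ (n + 1) * N := Nat.mul_le_mul_right N (by omega)
    omega
  · have hm : (⟨p, fun i => (H i).eval I.fn v0⟩ : Σ q : Prd, Fin (arPrd q) → D) ∈
        Query.set I (⟨p, H, c⟩ : Query F arF Pc arP Prd arPrd) := ⟨v0, hv0, rfl⟩
    have hdisj : ∀ x ∈ (rv n).fv, x ∉ (SQ n).1.fv := fun x hx hmem =>
      absurd ((main n).2 x hmem) (not_lt.2 (hrvfv n x hx).1)
    obtain ⟨w, hw, -⟩ :=
      step_exists I H B c (π n) (SQ n).1 (SQ n).2 hdisj v0 hv0 ((main n).1 hm)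
        ((hhp n).trans ((SQ n).2.symm))
    exact ⟨(hhp n).trans ((SQ n).2.symm), ⟨w, hw⟩, rfl⟩

end Stmt5Aux

end CLP
open CLP in
/-- for a rule `r = H ← c ◇ B` (with `c` satisfiable), if `⟨B|c⟩` is
more general than `⟨H|c⟩` then `⟨H|c⟩` loops w.r.t. `{r}`. -/
theorem stmt5 {F : Type} {arF : F → ℕ} {Pc : Type} {arP : Pc → ℕ}
    {Prd : Type} {arPrd : Prd → ℕ} {D : Type} (I : Interp F arF Pc arP D)
    (r : Rule F arF Pc arP Prd arPrd) (hc : ∃ v : ℕ → D, r.con.Sat I v)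
    (hmg : MoreGen I r.bodyQuery r.headQuery) :
    Loops I {r} r.headQuery := by
  obtain ⟨hp, hargs, con, bp, bargs⟩ := r
  obtain ⟨v0, hv0⟩ := hc
  have hbp : bp = hp := by
    have hmem : (⟨hp, fun i => (hargs i).eval I.fn v0⟩ : Σ q : Prd, Fin (arPrd q) → D) ∈
        (Rule.headQuery ⟨hp, hargs, con, bp, bargs⟩).set I := ⟨v0, hv0, rfl⟩
    obtain ⟨u, hu, heq⟩ := hmg hmem
    exact (congrArg Sigma.fst heq).symm
  subst hbp
  exact stmt5_aux I bp hargs bargs con ⟨v0, hv0⟩ hmg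
end
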